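/- For every fixed κ ≥ 1, the function E ↦ g((κ − 1/2)E + κ − 1) − g(E/2) is nonincreasing on [0,∞) and converges to ln(2κ − 1) as E → ∞. -/

import Mathlib

noncomputable def g (x : ℝ) : ℝ := (x + 1) * Real.log (x + 1) - x * Real.log x

/-! With `c = 2κ - 1` and `h t = g ((t - 1) / 2)` the function is `s ↦ h (c s) - h s` at
`s = E + 1`. Its derivative is `(ψ (c s) - ψ s) / s` for
`ψ t = t h' t = (t / 2) log ((t + 1) / (t - 1))`, and `ψ` is antitone since
`ψ (1 / x) = ∑ x ^ (2k) / (2k + 1)` (the `artanh` series). For the limit, `g x = log x + 1 + o(1)`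
and the ratio of the two arguments of `g` tends to `c`. -/

open Real Filter Set Topology

lemma hasSum_log_sub_log_div {x : ℝ} (hx0 : x ≠ 0) (hx : |x| < 1) :
    HasSum (fun k : ℕ => 2 * x ^ (2 * k) / (2 * k + 1)) ((log (1 + x) - log (1 - x)) / x) := by
  have hterm (k : ℕ) :
      2 * (1 / (2 * k + 1)) * x ^ (2 * k + 1) / x = 2 * x ^ (2 * k) / (2 * k + 1) := by
    field_simp
    ring
  simpa only [hterm] using (hasSum_log_sub_log_of_abs_lt_one hx).div_const x

lemma monotoneOn_log_sub_log_div :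
    MonotoneOn (fun x => (log (1 + x) - log (1 - x)) / x) (Ioo 0 1) := by
  intro x ⟨hx0, hx1⟩ y ⟨hy0, hy1⟩ hxy
  refine hasSum_le (fun k => ?_) (hasSum_log_sub_log_div hx0.ne' ?_)
    (hasSum_log_sub_log_div hy0.ne' ?_)
  · gcongr
  · rwa [abs_of_pos hx0]
  · rwa [abs_of_pos hy0]

lemma antitoneOn_mul_log_sub_log :
    AntitoneOn (fun t => t * (log (t + 1) - log (t - 1))) (Ioi 1) := by
  have hmaps : MapsTo (fun t : ℝ => t⁻¹) (Ioi 1) (Ioo 0 1) := fun t ht =>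
    ⟨inv_pos.2 (zero_lt_one.trans ht), inv_lt_one_of_one_lt₀ ht⟩
  refine AntitoneOn.congr (fun s hs t ht hst => monotoneOn_log_sub_log_div (hmaps ht) (hmaps hs)
    (inv_anti₀ (zero_lt_one.trans hs) hst)) fun t ht => ?_
  have ht : 1 < t := ht
  have ht0 : t ≠ 0 := by positivity
  simp only [div_inv_eq_mul]
  rw [show 1 + t⁻¹ = (t + 1) / t by field_simp, show 1 - t⁻¹ = (t - 1) / t by field_simp,
    log_div (by linarith) ht0, log_div (by linarith) ht0]
  ring

lemma antitoneOn_comp_mul_sub {h h' : ℝ → ℝ} {a c : ℝ} (ha : 0 ≤ a) (hc : 1 ≤ c)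
    (hcont : ContinuousOn h (Ici a)) (hderiv : ∀ t ∈ Ioi a, HasDerivAt h (h' t) t)
    (hanti : AntitoneOn (fun t => t * h' t) (Ioi a)) :
    AntitoneOn (fun s => h (c * s) - h s) (Ici a) := by
  have hle {s : ℝ} (hs : a ≤ s) : s ≤ c * s := le_mul_of_one_le_left (ha.trans hs) hc
  apply antitoneOn_of_hasDerivWithinAt_nonpos (convex_Ici a) (f' := fun s => c * h' (c * s) - h' s)
  · exact (hcont.comp (continuousOn_const.mul continuousOn_id)
      fun s (hs : a ≤ s) => hs.trans (hle hs)).sub hcont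
  · intro s hs
    rw [interior_Ici] at hs
    have hcs : c * s ∈ Ioi a := lt_of_lt_of_le hs (hle hs.le)
    have := ((hderiv _ hcs).comp s ((hasDerivAt_id s).const_mul c)).sub (hderiv s hs)
    exact (this.congr_deriv (by simp [mul_comm])).hasDerivWithinAt
  · intro s hs
    rw [interior_Ici] at hs
    have hs0 : 0 < s := ha.trans_lt hs
    have hmul := hanti hs (lt_of_lt_of_le hs (hle hs.le)) (hle hs.le)
    have : s * (c * h' (c * s) - h' s) ≤ 0 := by linarith
    exact nonpos_of_mul_nonpos_right this hs0

lemma continuous_g : Continuous g :=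
  (continuous_mul_log.comp (continuous_add_const 1)).sub continuous_mul_log

lemma hasDerivAt_g {x : ℝ} (hx : 0 < x) : HasDerivAt g (log (x + 1) - log x) x := by
  have := (hasDerivAt_mul_log (by linarith : x + 1 ≠ 0)).comp_add_const.sub
    (hasDerivAt_mul_log hx.ne')
  exact this.congr_deriv (by ring)

lemma g_sub_log_eq {x : ℝ} (hx : 0 < x) :
    g x - log x = x * log (1 + 1 / x) + log (1 + 1 / x) := by
  rw [show 1 + 1 / x = (x + 1) / x by field_simp, log_div (by linarith) hx.ne', g]
  ring

lemma tendsto_g_sub_log : Tendsto (fun x => g x - log x) atTop (𝓝 1) := by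
  have hlog : Tendsto (fun x : ℝ => log (1 + 1 / x)) atTop (𝓝 0) := by
    have h1 : Tendsto (fun x : ℝ => 1 + 1 / x) atTop (𝓝 1) := by
      simpa using tendsto_inv_atTop_zero.const_add (1 : ℝ)
    simpa only [log_one, Function.comp_def] using (continuousAt_log one_ne_zero).tendsto.comp h1
  have := (tendsto_mul_log_one_add_div_atTop 1).add hlog
  rw [add_zero] at this
  exact this.congr' ((eventually_gt_atTop 0).mono fun x hx => (g_sub_log_eq hx).symm)

lemma tendsto_sub_comp_of_tendsto_sub_log {α : Type*} {l : Filter α} {f : ℝ → ℝ}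
    {u v : α → ℝ} {L c : ℝ} (hf : Tendsto (fun x => f x - log x) atTop (𝓝 L))
    (hu : Tendsto u l atTop) (hv : Tendsto v l atTop) (huv : Tendsto (fun a => u a / v a) l (𝓝 c))
    (hc : c ≠ 0) : Tendsto (fun a => f (u a) - f (v a)) l (𝓝 (log c)) := by
  have := ((hf.comp hu).sub (hf.comp hv)).add ((continuousAt_log hc).tendsto.comp huv)
  rw [sub_self, zero_add] at this
  refine this.congr' ?_
  filter_upwards [hu.eventually_gt_atTop 0, hv.eventually_gt_atTop 0] with a hua hva
  simp only [Function.comp_apply, log_div hua.ne' hva.ne']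
  ring

lemma antitoneOn_g_half_sub_one_comp_mul_sub {c : ℝ} (hc : 1 ≤ c) :
    AntitoneOn (fun s => g ((c * s - 1) / 2) - g ((s - 1) / 2)) (Ici 1) := by
  refine antitoneOn_comp_mul_sub (h := fun t => g ((t - 1) / 2))
    (h' := fun t => (log (t + 1) - log (t - 1)) / 2) zero_le_one hc
    (continuous_g.comp (by fun_prop)).continuousOn (fun t ht => ?_)
    (fun s hs t ht hst => ?_)
  · have ht : 1 < t := ht
    have := (hasDerivAt_g (x := (t - 1) / 2) (by linarith)).comp t
      (((hasDerivAt_id t).sub_const 1).div_const 2)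
    refine this.congr_deriv ?_
    rw [show (t - 1) / 2 + 1 = (t + 1) / 2 by ring, log_div (by linarith) two_ne_zero,
      log_div (by linarith) two_ne_zero]
    ring
  · have := antitoneOn_mul_log_sub_log hs ht hst
    dsimp only at this ⊢
    linarith

/-- for fixed `κ ≥ 1`, `E ↦ g((κ−1/2)E + κ−1) − g(E/2)` is
nonincreasing on `[0,∞)` and converges to `ln(2κ−1)` as `E → ∞`. -/
theorem upper_bound_antitone_limit (κ : ℝ) (hκ : 1 ≤ κ) :
    AntitoneOn (fun E : ℝ => g ((κ - 1 / 2) * E + κ - 1) - g (E / 2)) (Set.Ici 0) ∧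
    Filter.Tendsto (fun E : ℝ => g ((κ - 1 / 2) * E + κ - 1) - g (E / 2))
      Filter.atTop (nhds (Real.log (2 * κ - 1))) := by
  constructor
  · rintro E (hE : 0 ≤ E) F (hF : 0 ≤ F) hEF
    have := antitoneOn_g_half_sub_one_comp_mul_sub (c := 2 * κ - 1) (by linarith)
      (show (1 : ℝ) ≤ E + 1 by linarith) (show (1 : ℝ) ≤ F + 1 by linarith) (by linarith)
    dsimp only at this ⊢
    convert this using 4 <;> ring
  · have hu : Tendsto (fun E : ℝ => (κ - 1 / 2) * E + κ - 1) atTop atTop :=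
      (tendsto_atTop_add_const_right _ (κ - 1)
        (tendsto_id.const_mul_atTop (by linarith : 0 < κ - 1 / 2))).congr fun E => by
          simp only [id_eq]; ring
    have hv : Tendsto (fun E : ℝ => E / 2) atTop atTop := tendsto_id.atTop_div_const two_pos
    have huv : Tendsto (fun E : ℝ => ((κ - 1 / 2) * E + κ - 1) / (E / 2)) atTop
        (𝓝 (2 * κ - 1)) := by
      have := (tendsto_inv_atTop_zero.const_mul (2 * κ - 2)).const_add (2 * κ - 1)
      rw [mul_zero, add_zero] at this
      refine this.congr' ((eventually_ne_atTop 0).mono fun E hE => ?_)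
      field_simp
      ring
    exact tendsto_sub_comp_of_tendsto_sub_log tendsto_g_sub_log hu hv huv (by linarith)
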